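/- Let X be an irreducible, finite-dimensional, Jacobson topological space in which all maximal chains of irreducible closed subsets have the same length. Then for every closed point x ∈ X and every irreducible closed subset Z containing x, dim Z + codim(Z, X) = dim X. -/

import Mathlib

/-!
A longest chain of irreducible closed subsets ending inside `Z` must end at `Z`, start at a
minimal element and have covering steps, since otherwise it could be lengthened; likewise a
longest chain from `Z` to `X` has covering steps. Their concatenation is then a maximal chain,
hence as long as a longest chain of `X`, which is maximal for the same reason.
-/

open TopologicalSpace Order
/-- A chain of irreducible closed subsets is saturated (maximal with given endpoints)
if each step is a covering relation. -/
def IsSaturatedChain {X : Type*} [TopologicalSpace X]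
    (p : LTSeries (IrreducibleCloseds X)) : Prop :=
  ∀ i : Fin p.length, p.toFun i.castSucc ⋖ p.toFun i.succ

/-- A topological space is catenary if any two saturated chains of irreducible closed
subsets with the same endpoints have the same length. -/
def IsCatenarySpace (X : Type*) [TopologicalSpace X] : Prop :=
  ∀ p q : LTSeries (IrreducibleCloseds X), p.head = q.head → p.last = q.last →
    IsSaturatedChain p → IsSaturatedChain q → p.length = q.length

/-- A maximal chain of irreducible closed subsets: saturated, starting at a minimal
irreducible closed subset and ending at a maximal one. -/
def IsMaximalChain {X : Type*} [TopologicalSpace X]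
    (p : LTSeries (IrreducibleCloseds X)) : Prop :=
  IsSaturatedChain p ∧ IsMin p.head ∧ IsMax p.last

/-- The codimension `codim(Y, Z)`: the supremum of lengths of chains of irreducible
closed subsets from `Y` to `Z`. -/
noncomputable def relCodim {X : Type*} [TopologicalSpace X]
    (Y Z : IrreducibleCloseds X) : ℕ∞ :=
  ⨆ p : {p : LTSeries (IrreducibleCloseds X) // p.head = Y ∧ p.last = Z},
    (p.1.length : ℕ∞)

/-- The dimension of the irreducible closed subset `Y`: the supremum of lengths of
chains of irreducible closed subsets contained in `Y`. -/
noncomputable def chainDim {X : Type*} [TopologicalSpace X]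
    (Y : IrreducibleCloseds X) : ℕ∞ :=
  ⨆ p : {p : LTSeries (IrreducibleCloseds X) // p.last ≤ Y}, (p.1.length : ℕ∞)

/-- The dimension of `X`: the supremum of lengths of chains of irreducible closed
subsets of `X`. -/
noncomputable def spaceDim (X : Type*) [TopologicalSpace X] : ℕ∞ :=
  ⨆ p : LTSeries (IrreducibleCloseds X), (p.length : ℕ∞)

/-- The codimension of `Y` in the ambient space: the supremum of lengths of chains of
irreducible closed subsets starting at `Y`. -/
noncomputable def codimAbove {X : Type*} [TopologicalSpace X]
    (Y : IrreducibleCloseds X) : ℕ∞ :=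
  ⨆ p : {p : LTSeries (IrreducibleCloseds X) // p.head = Y}, (p.1.length : ℕ∞)

/-- A topological space is equicodimensional if all minimal irreducible closed subsets
have the same codimension. -/
def IsEquicodim (X : Type*) [TopologicalSpace X] : Prop :=
  ∀ Y Y' : IrreducibleCloseds X, IsMin Y → IsMin Y' → codimAbove Y = codimAbove Y'

namespace RelSeries

variable {α : Type*} {r : SetRel α α}

@[simp]
lemma head_insertNth (p : RelSeries r) (i : Fin p.length) (a : α)
    (h₁ : (p i.castSucc, a) ∈ r) (h₂ : (a, p i.succ) ∈ r) :
    (p.insertNth i a h₁ h₂).head = p.head := by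
  change Fin.insertNth (α := fun _ => α) i.succ.castSucc a p.toFun 0 = p.toFun 0
  rw [Fin.insertNth_apply_below (Fin.castSucc_pos i.succ_pos)]
  rfl

@[simp]
lemma last_insertNth (p : RelSeries r) (i : Fin p.length) (a : α)
    (h₁ : (p i.castSucc, a) ∈ r) (h₂ : (a, p i.succ) ∈ r) :
    (p.insertNth i a h₁ h₂).last = p.last := by
  change Fin.insertNth (α := fun _ => α) i.succ.castSucc a p.toFun (Fin.last _) =
    p.toFun (Fin.last _)
  rw [Fin.insertNth_apply_above (Fin.castSucc_lt_last i.succ)]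
  simp only [eq_rec_constant, Fin.pred_last]

end RelSeries

namespace LTSeries

variable {α : Type*} [Preorder α]

lemma covBy_of_forall_length_le {p : LTSeries α}
    (hp : ∀ q : LTSeries α, q.head = p.head → q.last = p.last → q.length ≤ p.length)
    (i : Fin p.length) : p i.castSucc ⋖ p i.succ := by
  refine ⟨p.step i, fun c hc₁ hc₂ => ?_⟩
  have := hp (p.insertNth i c hc₁ hc₂) (by simp) (by simp)
  simp [RelSeries.insertNth] at this

lemma isMin_head_of_forall_length_le {p : LTSeries α}
    (hp : ∀ q : LTSeries α, q.last = p.last → q.length ≤ p.length) : IsMin p.head := by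
  intro a ha
  by_contra hna
  have := hp (p.cons a (lt_of_le_not_ge ha hna)) (by simp)
  simp at this

lemma covBy_smash {p q : LTSeries α} (h : p.last = q.head)
    (hp : ∀ i : Fin p.length, p i.castSucc ⋖ p i.succ)
    (hq : ∀ i : Fin q.length, q i.castSucc ⋖ q i.succ) :
    ∀ i : Fin (p.length + q.length), p.smash q h i.castSucc ⋖ p.smash q h i.succ := by
  refine Fin.addCases (fun i => ?_) (fun i => ?_)
  · rw [RelSeries.smash_castAdd, RelSeries.smash_succ_castAdd]
    exact hp i
  · rw [RelSeries.smash_natAdd, RelSeries.smash_succ_natAdd]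
    exact hq i

lemma exists_length_eq_iSup (P : LTSeries α → Prop) (hP : ∃ p, P p)
    (h : ⨆ p : {p // P p}, (p.1.length : ℕ∞) ≠ ⊤) :
    ∃ p, P p ∧ (p.length : ℕ∞) = ⨆ q : {q // P q}, (q.1.length : ℕ∞) ∧
      ∀ q, P q → q.length ≤ p.length := by
  have : Nonempty {p // P p} := hP.elim fun p hp => ⟨⟨p, hp⟩⟩
  obtain ⟨⟨p, hp⟩, hp_len⟩ := ENat.exists_eq_iSup_of_lt_top h.lt_top
  refine ⟨p, hp, hp_len, fun q hq => ?_⟩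
  exact_mod_cast hp_len ▸ le_iSup (fun q : {q // P q} => (q.1.length : ℕ∞)) ⟨q, hq⟩

end LTSeries

section IrreducibleCloseds

variable {X : Type*} [TopologicalSpace X]

lemma chainDim_le_spaceDim (Y : IrreducibleCloseds X) : chainDim Y ≤ spaceDim X :=
  iSup_le fun p => le_iSup (fun p : LTSeries _ => (p.length : ℕ∞)) p.1

lemma relCodim_le_spaceDim (Y Z : IrreducibleCloseds X) : relCodim Y Z ≤ spaceDim X :=
  iSup_le fun p => le_iSup (fun p : LTSeries _ => (p.length : ℕ∞)) p.1

lemma chainDim_eq_spaceDim_of_forall_le {Y : IrreducibleCloseds X} (hY : ∀ W, W ≤ Y) :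
    chainDim Y = spaceDim X :=
  (chainDim_le_spaceDim Y).antisymm <|
    iSup_le fun p => le_iSup (fun p : {p : LTSeries _ // p.last ≤ Y} => (p.1.length : ℕ∞))
      ⟨p, hY _⟩

lemma exists_saturatedChain_isMin_head_length_eq_chainDim (Y : IrreducibleCloseds X)
    (hY : chainDim Y ≠ ⊤) :
    ∃ p, IsSaturatedChain p ∧ IsMin p.head ∧ p.last = Y ∧ (p.length : ℕ∞) = chainDim Y := by
  obtain ⟨p, hpY, hp_len, hp_longest⟩ :=
    LTSeries.exists_length_eq_iSup (·.last ≤ Y) ⟨RelSeries.singleton _ Y, le_rfl⟩ hY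
  have hp_last : p.last = Y := by
    refine hpY.eq_of_not_lt fun hlt => ?_
    have := hp_longest (p.snoc Y hlt) (by simp)
    simp at this
  have hp_longest' (q : LTSeries _) (hq : q.last = p.last) : q.length ≤ p.length :=
    hp_longest q (hq.trans_le hpY)
  exact ⟨p, LTSeries.covBy_of_forall_length_le fun q _ hq => hp_longest' q hq,
    LTSeries.isMin_head_of_forall_length_le hp_longest', hp_last, hp_len⟩

lemma exists_saturatedChain_length_eq_relCodim {Y Z : IrreducibleCloseds X} (hYZ : Y ≤ Z)
    (h : relCodim Y Z ≠ ⊤) :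
    ∃ p, IsSaturatedChain p ∧ p.head = Y ∧ p.last = Z ∧ (p.length : ℕ∞) = relCodim Y Z := by
  have hne : ∃ p : LTSeries _, p.head = Y ∧ p.last = Z := by
    rcases hYZ.eq_or_lt with rfl | hlt
    · exact ⟨RelSeries.singleton _ Y, rfl, rfl⟩
    · exact ⟨(RelSeries.singleton _ Y).snoc Z hlt, rfl, RelSeries.last_snoc _ _ _⟩
  obtain ⟨p, ⟨hp_head, hp_last⟩, hp_len, hp_longest⟩ :=
    LTSeries.exists_length_eq_iSup (fun p => p.head = Y ∧ p.last = Z) hne h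
  refine ⟨p, LTSeries.covBy_of_forall_length_le fun q hq₁ hq₂ => ?_, hp_head, hp_last, hp_len⟩
  exact hp_longest q ⟨hq₁.trans hp_head, hq₂.trans hp_last⟩

end IrreducibleCloseds

theorem dim_add_codim_of_equal_maximal_chains_general (X : Type*) [TopologicalSpace X]
    [IrreducibleSpace X] (hfin : spaceDim X ≠ ⊤)
    (hmax : ∀ p q : LTSeries (IrreducibleCloseds X),
      IsMaximalChain p → IsMaximalChain q → p.length = q.length) :
    ∀ x : X, IsClosed ({x} : Set X) → ∀ Z : IrreducibleCloseds X, x ∈ Z →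
      chainDim Z +
        relCodim Z ⟨Set.univ, IrreducibleSpace.isIrreducible_univ X, isClosed_univ⟩ =
        spaceDim X := by
  intro _ _ Z _
  set T : IrreducibleCloseds X := ⟨Set.univ, IrreducibleSpace.isIrreducible_univ X, isClosed_univ⟩
  have hT (W : IrreducibleCloseds X) : W ≤ T := Set.subset_univ _
  have hT_max : IsMax T := fun W _ => hT W
  have hdim : chainDim T = spaceDim X := chainDim_eq_spaceDim_of_forall_le hT
  obtain ⟨p, hp_sat, hp_min, hp_last, hp_len⟩ :=
    exists_saturatedChain_isMin_head_length_eq_chainDim Z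
      (ne_top_of_le_ne_top hfin (chainDim_le_spaceDim Z))
  obtain ⟨q, hq_sat, hq_head, hq_last, hq_len⟩ :=
    exists_saturatedChain_length_eq_relCodim (hT Z)
      (ne_top_of_le_ne_top hfin (relCodim_le_spaceDim Z T))
  obtain ⟨r, hr_sat, hr_min, hr_last, hr_len⟩ :=
    exists_saturatedChain_isMin_head_length_eq_chainDim T (hdim ▸ hfin)
  have hpq : p.last = q.head := hp_last.trans hq_head.symm
  have hlen : (p.smash q hpq).length = r.length :=
    hmax _ _ ⟨LTSeries.covBy_smash hpq hp_sat hq_sat, by simpa using hp_min,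
        by simpa [hq_last] using hT_max⟩ ⟨hr_sat, hr_min, hr_last ▸ hT_max⟩
  rw [← hp_len, ← hq_len, ← hdim, ← hr_len, ← hlen, RelSeries.smash_length, Nat.cast_add]

theorem dim_add_codim_of_equal_maximal_chains (X : Type*) [TopologicalSpace X]
    [IrreducibleSpace X] [JacobsonSpace X] (hfin : spaceDim X ≠ ⊤)
    (hmax : ∀ p q : LTSeries (IrreducibleCloseds X),
      IsMaximalChain p → IsMaximalChain q → p.length = q.length) :
    ∀ x : X, IsClosed ({x} : Set X) → ∀ Z : IrreducibleCloseds X, x ∈ Z →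
      chainDim Z +
        relCodim Z ⟨Set.univ, IrreducibleSpace.isIrreducible_univ X, isClosed_univ⟩ =
        spaceDim X :=
  dim_add_codim_of_equal_maximal_chains_general X hfin hmax
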